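/- arXiv:1204.1624 — 2 statements merged into one kernel-verified Lean document; each statement's English description precedes it below -/
import Mathlib

section
/- (Upper bound on the probability of type-2 anomalies for MUCB.) Let K ≥ 2 and run MUCB(α) on K arms with exponentially distributed rewards. Then for every t ≥ 2, the probability of the type-2 anomaly satisfies P( {φ₂}_t ) ≤ t^{−α/2 + 1}. -/
open MeasureTheory ProbabilityTheory

/-- `pullCount I k t ω` is `T_{k,t}`, the number of rounds `m < t` at which arm `k` was pulled. -/
def pullCount {Ω : Type*} {K : ℕ} (I : ℕ → Ω → Fin K) (k : Fin K) (t : ℕ) (ω : Ω) : ℕ :=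
  ((Finset.range t).filter fun m => I m ω = k).card

/-- `reward X I m ω` is the reward `r_m` received at round `m`: the next unseen sample of the
pulled arm `I_m` (here `X k n` is the reward of the `(n+1)`-st pull of arm `k`, `n = 0, 1, …`). -/
def reward {Ω : Type*} {K : ℕ} (X : Fin K → ℕ → Ω → ℝ) (I : ℕ → Ω → Fin K)
    (m : ℕ) (ω : Ω) : ℝ :=
  X (I m ω) (pullCount I (I m ω) m ω) ω

/-- `sampleMean X I k t ω` is `X̄_{k,t}`, the empirical mean of the rewards obtained from arm `k`
during the first `t` rounds (junk value `0` if the arm was never pulled). -/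
noncomputable def sampleMean {Ω : Type*} {K : ℕ} (X : Fin K → ℕ → Ω → ℝ) (I : ℕ → Ω → Fin K)
    (k : Fin K) (t : ℕ) (ω : Ω) : ℝ :=
  (∑ n ∈ Finset.range (pullCount I k t ω), X k n ω) / (pullCount I k t ω)

/-- The MUCB(α) index `B_{k,t} = X̄_{k,t} · M_{k,t}(T_{k,t})` with
`M_{k,t}(u) = 1 / max {0, 1 − √(α ln t / u)}` and the convention `1/0 = +∞`: the index is `⊤`
exactly when `T_{k,t} ≤ α ln t` (in particular when `T_{k,t} = 0`), and otherwise equals the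
real number `X̄_{k,t} · (1 − √(α ln t / T_{k,t}))⁻¹`. -/
noncomputable def mucbIndex {Ω : Type*} {K : ℕ} (α : ℝ) (X : Fin K → ℕ → Ω → ℝ)
    (I : ℕ → Ω → Fin K) (k : Fin K) (t : ℕ) (ω : Ω) : EReal :=
  if pullCount I k t ω = 0 ∨ (pullCount I k t ω : ℝ) ≤ α * Real.log t then ⊤
  else ((sampleMean X I k t ω *
      (1 - Real.sqrt (α * Real.log t / (pullCount I k t ω)))⁻¹ : ℝ) : EReal)

/-- A policy `I` is deterministic if the arm chosen at each round `t` is a function of the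
history `(I_0, r_0, …, I_{t−1}, r_{t−1})` of past arms and rewards. -/
def IsDeterministicPolicy {Ω : Type*} {K : ℕ} (X : Fin K → ℕ → Ω → ℝ)
    (I : ℕ → Ω → Fin K) : Prop :=
  ∃ pol : (t : ℕ) → (Fin t → Fin K × ℝ) → Fin K,
    ∀ t ω, I t ω = pol t fun m => (I m.1 ω, reward X I m.1 ω)

/-- The policy `I` is a MUCB(α) policy: at every round it selects an arm of maximal index. -/
def IsMUCBPolicy {Ω : Type*} {K : ℕ} (α : ℝ) (X : Fin K → ℕ → Ω → ℝ)
    (I : ℕ → Ω → Fin K) : Prop :=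
  ∀ t ω k, mucbIndex α X I k t ω ≤ mucbIndex α X I (I t ω) t ω

/-!
On the anomaly, `T := T_{k*,t}` lies in `[1, t]`, exceeds `α ln t`, and the first `T` rewards of
arm `k*` sum to at most `T μ* (1 - ε)` with `ε = √(α ln t / T)`; this is an event about the
i.i.d. rewards of `k*` alone, whatever the policy. For fixed `T`, the Chernoff bound with the
exponential moment generating function `λ / (λ - s)` at `s = -λε / (1 - ε)` bounds it by
`exp (T (ε + ln (1 - ε))) ≤ exp (-T ε² / 2) = t ^ (-α/2)`, and a union bound over the `t` possible
values of `T` gives the claim.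
-/

open Real Set

theorem Real.add_sq_div_two_le_neg_log_one_sub {x : ℝ} (h₀ : 0 ≤ x) (h₁ : x < 1) :
    x + x ^ 2 / 2 ≤ -log (1 - x) := by
  have := sum_le_hasSum (Finset.range 2) (fun n _ => by positivity)
    (hasSum_pow_div_log_of_abs_lt_one (abs_lt.mpr ⟨by linarith, h₁⟩))
  norm_num [Finset.sum_range_succ] at this
  linarith

theorem lintegral_ofReal_exp_mul_expMeasure {lam s : ℝ} (hlam : 0 < lam) (hs : s < lam) :
    ∫⁻ x, ENNReal.ofReal (exp (s * x)) ∂expMeasure lam = ENNReal.ofReal (lam / (lam - s)) := by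
  have hdensity : ∀ x, exponentialPDF lam x * ENNReal.ofReal (exp (s * x)) =
      (Ici 0).indicator (fun x => ENNReal.ofReal (lam * exp ((s - lam) * x))) x := by
    intro x
    rcases lt_or_ge x 0 with hx | hx
    · simp [exponentialPDF_of_neg hx, hx]
    · rw [exponentialPDF_of_nonneg hx, indicator_of_mem (mem_Ici.mpr hx),
        ← ENNReal.ofReal_mul (by positivity), mul_assoc, ← exp_add]
      ring_nf
  have hint : IntegrableOn (fun x => lam * exp ((s - lam) * x)) (Ioi 0) :=
    (integrableOn_exp_mul_Ioi (by linarith) 0).const_mul lam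
  rw [expMeasure, gammaMeasure, show gammaPDF 1 lam = exponentialPDF lam from rfl,
    lintegral_withDensity_eq_lintegral_mul (f := exponentialPDF lam) _
      (measurable_exponentialPDFReal lam).ennreal_ofReal (by fun_prop)]
  simp only [Pi.mul_apply, hdensity]
  rw [lintegral_indicator measurableSet_Ici, setLIntegral_congr Ioi_ae_eq_Ici.symm,
    ← ofReal_integral_eq_lintegral_ofReal hint (ae_of_all _ fun x => by positivity),
    integral_const_mul, integral_exp_mul_Ioi (by linarith), mul_zero, exp_zero, ← neg_sub lam s,
    div_neg, neg_div, neg_neg, mul_one_div]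

section ExponentialVariable

variable {Ω : Type*} [MeasurableSpace Ω] {P : Measure Ω} {X : Ω → ℝ} {lam s : ℝ}

theorem integrable_exp_mul_of_map_eq_expMeasure (hX : Measurable X)
    (hd : P.map X = expMeasure lam) (hlam : 0 < lam) (hs : s < lam) :
    Integrable (fun ω => exp (s * X ω)) P := by
  have hexp : Integrable (fun x => exp (s * x)) (expMeasure lam) := by
    refine ⟨by fun_prop, ?_⟩
    rw [hasFiniteIntegral_iff_ofReal (ae_of_all _ fun x => (exp_pos _).le),
      lintegral_ofReal_exp_mul_expMeasure hlam hs]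
    exact ENNReal.ofReal_lt_top
  rw [← hd] at hexp
  exact hexp.comp_measurable hX

theorem mgf_of_map_eq_expMeasure (hX : Measurable X) (hd : P.map X = expMeasure lam)
    (hlam : 0 < lam) (hs : s < lam) : mgf X P s = lam / (lam - s) := by
  rw [← mgf_id_map hX.aemeasurable, hd, mgf, integral_eq_lintegral_of_nonneg_ae
      (ae_of_all _ fun x => (exp_pos _).le) (by fun_prop)]
  simp only [id]
  rw [lintegral_ofReal_exp_mul_expMeasure hlam hs, ENNReal.toReal_ofReal]
  exact div_nonneg hlam.le (by linarith)

end ExponentialVariable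

theorem measure_sum_le_mul_one_sub_le_of_iIndepFun_expMeasure {Ω : Type*} [MeasurableSpace Ω]
    {P : Measure Ω} {X : ℕ → Ω → ℝ} {lam ε : ℝ} (hmeas : ∀ n, Measurable (X n))
    (hindep : iIndepFun X P) (hd : ∀ n, P.map (X n) = expMeasure lam) (hlam : 0 < lam)
    (hε₀ : 0 ≤ ε) (hε₁ : ε < 1) (u : ℕ) :
    P {ω | ∑ n ∈ Finset.range u, X n ω ≤ u * (lam⁻¹ * (1 - ε))} ≤
      ENNReal.ofReal (exp (-(u * ε ^ 2 / 2))) := by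
  have := hindep.isProbabilityMeasure
  have hε : 0 < 1 - ε := by linarith
  -- the Chernoff parameter `s` is the one making each factor `mgf (X n) P s` equal to `1 - ε`
  set s := -(lam * ε / (1 - ε)) with hs_def
  have hs : s ≤ 0 := neg_nonpos.mpr (div_nonneg (by positivity) (by linarith))
  have hmgf : ∀ n, mgf (X n) P s = 1 - ε := fun n => by
    rw [mgf_of_map_eq_expMeasure (hmeas n) (hd n) hlam (by linarith), hs_def]
    field_simp
    ring
  have hchernoff := measure_le_le_exp_mul_mgf (μ := P) (X := ∑ n ∈ Finset.range u, X n)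
    (u * (lam⁻¹ * (1 - ε))) hs (hindep.integrable_exp_mul_sum hmeas
      fun n _ => integrable_exp_mul_of_map_eq_expMeasure (hmeas n) (hd n) hlam (by linarith))
  rw [hindep.mgf_sum hmeas, Finset.prod_congr rfl fun n _ => hmgf n, Finset.prod_const,
    Finset.card_range] at hchernoff
  have hbound : exp (-s * (u * (lam⁻¹ * (1 - ε)))) * (1 - ε) ^ u ≤ exp (-(u * ε ^ 2 / 2)) := by
    have hexponent : -s * (u * (lam⁻¹ * (1 - ε))) = u * ε := by
      rw [hs_def]
      field_simp
    rw [hexponent, ← exp_log hε, ← exp_nat_mul, ← exp_add, exp_le_exp]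
    have := mul_le_mul_of_nonneg_left (add_sq_div_two_le_neg_log_one_sub hε₀ hε₁) u.cast_nonneg
    linarith
  simp only [Finset.sum_apply] at hchernoff
  rw [← ofReal_measureReal]
  exact ENNReal.ofReal_le_ofReal (hchernoff.trans hbound)

theorem measure_lt_and_sum_le_mul_one_sub_sqrt_le {Ω : Type*} [MeasurableSpace Ω]
    {P : Measure Ω} {X : ℕ → Ω → ℝ} {lam c : ℝ} (hmeas : ∀ n, Measurable (X n))
    (hindep : iIndepFun X P) (hd : ∀ n, P.map (X n) = expMeasure lam) (hlam : 0 < lam)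
    (hc : 0 ≤ c) (u : ℕ) :
    P {ω | c < u ∧ ∑ n ∈ Finset.range u, X n ω ≤ u * (lam⁻¹ * (1 - √(c / u)))} ≤
      ENNReal.ofReal (exp (-(c / 2))) := by
  by_cases hcu : c < u
  · have hu : (0 : ℝ) < u := hc.trans_lt hcu
    have hε₁ : √(c / u) < 1 := by rwa [sqrt_lt' one_pos, one_pow, div_lt_one hu]
    have hexponent : (u : ℝ) * √(c / u) ^ 2 / 2 = c / 2 := by
      rw [sq_sqrt (by positivity)]
      field_simp
    calc P {ω | c < u ∧ ∑ n ∈ Finset.range u, X n ω ≤ u * (lam⁻¹ * (1 - √(c / u)))}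
        ≤ P {ω | ∑ n ∈ Finset.range u, X n ω ≤ u * (lam⁻¹ * (1 - √(c / u)))} :=
          measure_mono fun ω h => h.2
      _ ≤ ENNReal.ofReal (exp (-(u * √(c / u) ^ 2 / 2))) :=
          measure_sum_le_mul_one_sub_le_of_iIndepFun_expMeasure hmeas hindep hd hlam
            (sqrt_nonneg _) hε₁ u
      _ = ENNReal.ofReal (exp (-(c / 2))) := by rw [hexponent]
  · simp only [hcu, false_and, ofPred_false, measure_empty, zero_le]

theorem pullCount_le {Ω : Type*} {K : ℕ} (I : ℕ → Ω → Fin K) (k : Fin K) (t : ℕ) (ω : Ω) :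
    pullCount I k t ω ≤ t :=
  (Finset.card_filter_le _ _).trans_eq (Finset.card_range t)

theorem sum_le_of_mucbIndex_lt {Ω : Type*} {K : ℕ} {α : ℝ} {X : Fin K → ℕ → Ω → ℝ}
    {I : ℕ → Ω → Fin K} {k : Fin K} {t : ℕ} {ω : Ω} {μ : ℝ}
    (h : mucbIndex α X I k t ω < μ) :
    α * log t < pullCount I k t ω ∧
      ∑ n ∈ Finset.range (pullCount I k t ω), X k n ω ≤
        pullCount I k t ω * (μ * (1 - √(α * log t / pullCount I k t ω))) := by
  rw [mucbIndex] at h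
  split_ifs at h with hT
  · exact absurd h not_top_lt
  simp only [not_or, not_le] at hT
  obtain ⟨hT₀, hTc⟩ := hT
  have hT : (0 : ℝ) < pullCount I k t ω := by positivity
  have hε : 0 < 1 - √(α * log t / pullCount I k t ω) := by
    rwa [sub_pos, sqrt_lt' one_pos, one_pow, div_lt_one hT]
  refine ⟨hTc, ?_⟩
  have h' := EReal.coe_lt_coe_iff.mp h
  rw [sampleMean, ← div_eq_mul_inv, div_div, div_lt_iff₀ (mul_pos hT hε)] at h'
  exact (h'.trans_eq (by ring)).le

theorem mucb_type_two_anomaly_bound_general {Ω : Type*} [MeasurableSpace Ω] (P : Measure Ω) (K : ℕ)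
    (lam : Fin K → ℝ) (hlam : ∀ k, 0 < lam k)
    (X : Fin K → ℕ → Ω → ℝ) (hXmeas : ∀ k n, Measurable (X k n))
    (hindep : iIndepFun (fun p : Fin K × ℕ => X p.1 p.2) P)
    (hdist : ∀ k n, Measure.map (X k n) P = expMeasure (lam k))
    (I : ℕ → Ω → Fin K) (kstar : Fin K) (α : ℝ) (hα : 0 ≤ α) (t : ℕ) (ht : 2 ≤ t) :
    P {ω | 1 ≤ pullCount I kstar t ω ∧
        mucbIndex α X I kstar t ω < (((lam kstar)⁻¹ : ℝ) : EReal)} ≤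
      ENNReal.ofReal ((t : ℝ) ^ (-(α / 2) + 1)) := by
  have hindep_kstar : iIndepFun (X kstar) P :=
    hindep.precomp (g := fun n => (kstar, n)) (Prod.mk_right_injective kstar)
  have hc : 0 ≤ α * log t := mul_nonneg hα (log_natCast_nonneg t)
  have ht₀ : (0 : ℝ) < t := by exact_mod_cast (by omega : 0 < t)
  calc P {ω | 1 ≤ pullCount I kstar t ω ∧
        mucbIndex α X I kstar t ω < (((lam kstar)⁻¹ : ℝ) : EReal)}
      ≤ P (⋃ u ∈ Finset.Icc 1 t, {ω | α * log t < u ∧ ∑ n ∈ Finset.range u, X kstar n ω ≤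
          u * ((lam kstar)⁻¹ * (1 - √(α * log t / u)))}) :=
        measure_mono fun ω ⟨h₁, h⟩ => mem_biUnion
          (Finset.mem_Icc.mpr ⟨h₁, pullCount_le I kstar t ω⟩) (sum_le_of_mucbIndex_lt h)
    _ ≤ ∑ u ∈ Finset.Icc 1 t, P {ω | α * log t < u ∧ ∑ n ∈ Finset.range u, X kstar n ω ≤
          u * ((lam kstar)⁻¹ * (1 - √(α * log t / u)))} := measure_biUnion_finset_le _ _
    _ ≤ ∑ _u ∈ Finset.Icc 1 t, ENNReal.ofReal (exp (-(α * log t / 2))) :=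
        Finset.sum_le_sum fun u _ => measure_lt_and_sum_le_mul_one_sub_sqrt_le (hXmeas kstar)
          hindep_kstar (hdist kstar) (hlam kstar) hc u
    _ = ENNReal.ofReal ((t : ℝ) ^ (-(α / 2) + 1)) := by
        rw [Finset.sum_const, Nat.card_Icc, Nat.add_sub_cancel, nsmul_eq_mul,
          ← ENNReal.ofReal_natCast, ← ENNReal.ofReal_mul (Nat.cast_nonneg t),
          rpow_add ht₀, rpow_one, rpow_def_of_pos ht₀]
        ring_nf

/-- **Upper bound on the probability of type-2 anomalies for MUCB (Lemma 3).**
Run MUCB(α) on `K ≥ 2` arms with i.i.d. exponential rewards (unique optimal arm `k*`,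
`μ* = 1/λ_{k*}`).  Then for every `t ≥ 2`, the type-2 anomaly
`{φ₂}_t = {T_{k*,t} ≥ 1 and B_{k*,t} < μ*}` satisfies `P({φ₂}_t) ≤ t^{−α/2+1}`. -/
theorem mucb_type_two_anomaly_bound {Ω : Type*} [MeasurableSpace Ω] (P : Measure Ω)
    [IsProbabilityMeasure P] (K : ℕ) (hK : 2 ≤ K)
    (lam : Fin K → ℝ) (hlam : ∀ k, 0 < lam k)
    (X : Fin K → ℕ → Ω → ℝ) (hXmeas : ∀ k n, Measurable (X k n))
    (hindep : iIndepFun (fun p : Fin K × ℕ => X p.1 p.2) P)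
    (hdist : ∀ k n, Measure.map (X k n) P = expMeasure (lam k))
    (I : ℕ → Ω → Fin K) (hImeas : ∀ t, Measurable (I t))
    (hdet : IsDeterministicPolicy X I)
    (kstar : Fin K) (hkstar : ∀ k, k ≠ kstar → (lam k)⁻¹ < (lam kstar)⁻¹)
    (α : ℝ) (hα : 0 ≤ α) (hmucb : IsMUCBPolicy α X I)
    (t : ℕ) (ht : 2 ≤ t) :
    P {ω | 1 ≤ pullCount I kstar t ω ∧
        mucbIndex α X I kstar t ω < (((lam kstar)⁻¹ : ℝ) : EReal)} ≤
      ENNReal.ofReal ((t : ℝ) ^ (-(α / 2) + 1)) :=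
  mucb_type_two_anomaly_bound_general P K lam hlam X hXmeas hindep hdist I kstar α hα t ht
end

section
/- (Fixed-sample-size deviation bound for the optimal arm.) Let λ > 0 with mean μ = 1/λ, let α > 0, t > 1, and let u ≥ 1 be an integer with u > α ln(t). If X_1, …, X_u are i.i.d. random variables distributed as the exponential distribution with rate λ, then P( (1/u) Σ_{i=1}^u X_i ≤ μ ( 1 − √( α ln(t)/u ) ) ) ≤ t^{−α/2}. -/
/-!
Chernoff's bound for the lower tail: for `θ ≤ 0`, `P(S ≤ ε) ≤ e^{-θε} 𝔼[e^{θS}]`. The moment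
generating function of `Exp(λ)` is `λ / (λ - θ)`, and for `S` a sum of `n` independent copies the
choice `θ = -λδ/(1-δ)` at `ε = (1-δ)n/λ` gives `P(S ≤ ε) ≤ e^{nδ}(1-δ)^n ≤ e^{-nδ²/2}`, using
`log(1-δ) ≤ -δ - δ²/2`. With `δ² = α ln t / u` the right-hand side is `t^{-α/2}`.
-/

open MeasureTheory ProbabilityTheory Real Set

lemma Real.log_one_sub_le_neg_sub_sq_div_two {x : ℝ} (hx₀ : 0 ≤ x) (hx₁ : x < 1) :
    log (1 - x) ≤ -x - x ^ 2 / 2 := by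
  have hsum := hasSum_pow_div_log_of_abs_lt_one (abs_lt.2 ⟨by linarith, hx₁⟩)
  have := sum_le_hasSum (Finset.range 2) (fun n _ => by positivity) hsum
  norm_num [Finset.sum_range_succ] at this
  linarith

namespace ProbabilityTheory

lemma exponentialPDFReal_mul_exp_mul (r θ : ℝ) :
    (fun x => exponentialPDFReal r x * exp (θ * x)) =
      (Ici 0).indicator (fun x => r * exp ((θ - r) * x)) := by
  ext x
  by_cases hx : 0 ≤ x
  · rw [indicator_of_mem (mem_Ici.2 hx), exponentialPDFReal, gammaPDFReal, if_pos hx]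
    simp only [rpow_one, Gamma_one, div_one, sub_self, rpow_zero, mul_one, mul_assoc, ← exp_add]
    ring_nf
  · rw [indicator_of_notMem (by simpa using hx), exponentialPDFReal, gammaPDFReal, if_neg hx,
      zero_mul]

variable {r θ : ℝ}

lemma integral_expMeasure_eq_integral_mul (hr : 0 < r) (f : ℝ → ℝ) :
    ∫ x, f x ∂expMeasure r = ∫ x, exponentialPDFReal r x * f x := by
  rw [expMeasure, gammaMeasure, integral_withDensity_eq_integral_toReal_smul (f := gammaPDF 1 r)
    (measurable_gammaPDFReal 1 r).ennreal_ofReal (ae_of_all _ fun _ => ENNReal.ofReal_lt_top)]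
  simp_rw [gammaPDF, ENNReal.toReal_ofReal (gammaPDFReal_nonneg one_pos hr _), smul_eq_mul]
  rfl

lemma integrable_expMeasure_iff (hr : 0 < r) {f : ℝ → ℝ} :
    Integrable f (expMeasure r) ↔ Integrable (fun x => exponentialPDFReal r x * f x) := by
  rw [expMeasure, gammaMeasure, integrable_withDensity_iff_integrable_smul' (f := gammaPDF 1 r)
    (measurable_gammaPDFReal 1 r).ennreal_ofReal (ae_of_all _ fun _ => ENNReal.ofReal_lt_top)]
  simp_rw [gammaPDF, ENNReal.toReal_ofReal (gammaPDFReal_nonneg one_pos hr _), smul_eq_mul]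
  rfl

lemma integrable_exp_mul_expMeasure (hr : 0 < r) (hθ : θ < r) :
    Integrable (fun x => exp (θ * x)) (expMeasure r) := by
  rw [integrable_expMeasure_iff hr, exponentialPDFReal_mul_exp_mul r θ,
    integrable_indicator_iff measurableSet_Ici, integrableOn_Ici_iff_integrableOn_Ioi]
  exact (integrableOn_exp_mul_Ioi (sub_neg.2 hθ) 0).const_mul r

lemma mgf_id_expMeasure (hr : 0 < r) (hθ : θ < r) :
    mgf id (expMeasure r) θ = r / (r - θ) := by
  rw [mgf, integral_expMeasure_eq_integral_mul hr]
  simp only [id]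
  rw [exponentialPDFReal_mul_exp_mul r θ, integral_indicator measurableSet_Ici,
    integral_Ici_eq_integral_Ioi, integral_const_mul, integral_exp_mul_Ioi (sub_neg.2 hθ),
    mul_zero, exp_zero, neg_div, ← div_neg, neg_sub, mul_one_div]

section Chernoff

variable {Ω ι : Type*} [MeasurableSpace Ω] {P : Measure Ω} [IsFiniteMeasure P] [Fintype ι]
  {X : ι → Ω → ℝ}

theorem iIndepFun.measureReal_sum_le_le_exp_mul_mgf_pow (hindep : iIndepFun X P)
    (hmeas : ∀ i, Measurable (X i)) {ν : Measure ℝ} (hdist : ∀ i, P.map (X i) = ν) {t : ℝ}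
    (ht : t ≤ 0) (hint : Integrable (fun x => exp (t * x)) ν) (ε : ℝ) :
    P.real {ω | ∑ i, X i ω ≤ ε} ≤ exp (-t * ε) * mgf id ν t ^ Fintype.card ι := by
  have hint_X : ∀ i, Integrable (fun ω => exp (t * X i ω)) P := fun i =>
    (integrable_map_measure (g := fun x => exp (t * x)) (by fun_prop)
      (hmeas i).aemeasurable).1 (hdist i ▸ hint)
  have hmgf_X : ∀ i, mgf (X i) P t = mgf id ν t := fun i => by
    rw [← hdist i, mgf_id_map (hmeas i).aemeasurable]
  have hchernoff := measure_le_le_exp_mul_mgf ε ht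
    (hindep.integrable_exp_mul_sum hmeas (s := .univ) fun i _ => hint_X i)
  simp only [Finset.sum_apply] at hchernoff
  rwa [hindep.mgf_sum hmeas, Finset.prod_congr rfl fun i _ => hmgf_X i, Finset.prod_const,
    Finset.card_univ] at hchernoff

theorem iIndepFun.measureReal_sum_le_le_of_map_eq_expMeasure (hindep : iIndepFun X P)
    (hmeas : ∀ i, Measurable (X i)) {r : ℝ} (hr : 0 < r) (hdist : ∀ i, P.map (X i) = expMeasure r)
    {δ : ℝ} (hδ₀ : 0 ≤ δ) (hδ₁ : δ < 1) :
    P.real {ω | ∑ i, X i ω ≤ (1 - δ) * Fintype.card ι / r} ≤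
      exp (-(Fintype.card ι * δ ^ 2 / 2)) := by
  set n := Fintype.card ι
  have h1δ : 0 < 1 - δ := sub_pos.2 hδ₁
  -- the Chernoff parameter minimizing `exp (-θ ε) * (r / (r - θ)) ^ n` at `ε = (1 - δ) n / r`
  set θ := -(r * δ / (1 - δ)) with hθ
  have hθ_nonpos : θ ≤ 0 := neg_nonpos.2 (by positivity)
  have hθ_lt : θ < r := hθ_nonpos.trans_lt hr
  have hmgf : mgf id (expMeasure r) θ = 1 - δ := by
    rw [mgf_id_expMeasure hr hθ_lt, hθ]
    field_simp
    ring
  have hexponent : -θ * ((1 - δ) * n / r) = δ * n := by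
    rw [hθ]
    field_simp
  have hone_sub : 1 - δ ≤ exp (-δ - δ ^ 2 / 2) :=
    (exp_log h1δ).symm.trans_le (exp_le_exp.2 (log_one_sub_le_neg_sub_sq_div_two hδ₀ hδ₁))
  calc P.real {ω | ∑ i, X i ω ≤ (1 - δ) * n / r}
      ≤ exp (δ * n) * (1 - δ) ^ n := by
        simpa only [hexponent, hmgf] using hindep.measureReal_sum_le_le_exp_mul_mgf_pow hmeas hdist
          hθ_nonpos (integrable_exp_mul_expMeasure hr hθ_lt) ((1 - δ) * n / r)
    _ ≤ exp (δ * n) * exp (-δ - δ ^ 2 / 2) ^ n := by gcongr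
    _ = exp (-(n * δ ^ 2 / 2)) := by
        rw [← exp_nat_mul, ← exp_add]
        ring_nf

end Chernoff

end ProbabilityTheory

theorem deviation_bound_optimal_arm_general {Ω : Type*} [MeasurableSpace Ω] (P : Measure Ω)
    [IsProbabilityMeasure P] (lam α t : ℝ) (hlam : 0 < lam) (hα : 0 < α) (ht : 1 < t)
    (u : ℕ) (hu : α * Real.log t < (u : ℝ))
    (X : Fin u → Ω → ℝ) (hXmeas : ∀ i, Measurable (X i))
    (hindep : iIndepFun X P)
    (hdist : ∀ i, Measure.map (X i) P = expMeasure lam) :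
    P {ω | (∑ i, X i ω) / u ≤ (1 / lam) * (1 - Real.sqrt (α * Real.log t / u))} ≤
      ENNReal.ofReal (t ^ (-(α / 2))) := by
  have hlog : 0 < α * log t := mul_pos hα (log_pos ht)
  have hu₀ : (0 : ℝ) < u := hlog.trans hu
  set q := α * log t / u
  have hq₀ : 0 < q := div_pos hlog hu₀
  have hq₁ : q < 1 := (div_lt_one hu₀).2 hu
  have hsqrt_lt : √q < 1 := (sqrt_lt' one_pos).2 (by rwa [one_pow])
  have hset : {ω | (∑ i, X i ω) / u ≤ 1 / lam * (1 - √q)} =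
      {ω | ∑ i, X i ω ≤ (1 - √q) * u / lam} := by
    ext ω
    rw [mem_ofPred_eq, mem_ofPred_eq, div_le_iff₀ hu₀]
    ring_nf
  have hexponent : -(u * √q ^ 2 / 2) = log t * -(α / 2) := by
    rw [sq_sqrt hq₀.le]
    simp only [q]
    field_simp
  rw [hset, ← ofReal_measureReal, rpow_def_of_pos (zero_lt_one.trans ht), ← hexponent]
  refine ENNReal.ofReal_le_ofReal ?_
  simpa only [Fintype.card_fin] using
    hindep.measureReal_sum_le_le_of_map_eq_expMeasure hXmeas hlam hdist (sqrt_nonneg q) hsqrt_lt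

/-- **Fixed-sample-size deviation bound for the optimal arm.**
Let `λ > 0` with mean `μ = 1/λ`, `α > 0`, `t > 1`, and let `u ≥ 1` be an integer with
`u > α ln t`.  If `X 0, …, X (u-1)` are i.i.d. exponential with rate `λ`, then
`P((1/u) Σ X i ≤ μ (1 − √(α ln t / u))) ≤ t^{−α/2}`. -/
theorem deviation_bound_optimal_arm {Ω : Type*} [MeasurableSpace Ω] (P : Measure Ω)
    [IsProbabilityMeasure P] (lam α t : ℝ) (hlam : 0 < lam) (hα : 0 < α) (ht : 1 < t)
    (u : ℕ) (hu1 : 1 ≤ u) (hu : α * Real.log t < (u : ℝ))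
    (X : Fin u → Ω → ℝ) (hXmeas : ∀ i, Measurable (X i))
    (hindep : iIndepFun X P)
    (hdist : ∀ i, Measure.map (X i) P = expMeasure lam) :
    P {ω | (∑ i, X i ω) / u ≤ (1 / lam) * (1 - Real.sqrt (α * Real.log t / u))} ≤
      ENNReal.ofReal (t ^ (-(α / 2))) :=
  deviation_bound_optimal_arm_general P lam α t hlam hα ht u hu X hXmeas hindep hdist
end
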